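/- arXiv:2602.00576 — 4 statements merged into one kernel-verified Lean document; each statement's English description precedes it below -/
import Mathlib

section
/- Let A = (A_1,...,A_n) be a probability vector with A_1 ≥ A_2 ≥ ... ≥ A_n > 0 and ∑ A_i = 1, and let w = (w_1,...,w_n) be positive nondecreasing weights 0 < w_1 ≤ w_2 ≤ ... ≤ w_n. Define B_i = A_i w_i / (∑_j A_j w_j) and assume B_1 ≥ B_2 ≥ ... ≥ B_n. Then A majorizes B: for every k ∈ {1,...,n}, ∑_{i=1}^k A_i ≥ ∑_{i=1}^k B_i, with equality at k = n. -/
/-- Increasing-weight renormalization is majorized: if `A` is a nonincreasing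
positive probability vector, `w` positive nondecreasing weights, and the
renormalized reweighting `B i = A i * w i / ∑ j, A j * w j` is also
nonincreasing, then `A` majorizes `B`. -/
theorem stmt_0 (n : ℕ) (A w B : Fin n → ℝ)
    (hApos : ∀ i, 0 < A i)
    (hAanti : ∀ i j : Fin n, i ≤ j → A j ≤ A i)
    (hAsum : ∑ i, A i = 1)
    (hwpos : ∀ i, 0 < w i)
    (hwmono : ∀ i j : Fin n, i ≤ j → w i ≤ w j)
    (hB : ∀ i, B i = A i * w i / ∑ j, A j * w j)
    (hBanti : ∀ i j : Fin n, i ≤ j → B j ≤ B i) :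
    (∀ k : ℕ, k ≤ n →
      ∑ i ∈ Finset.univ.filter (fun i : Fin n => (i : ℕ) < k), B i ≤
        ∑ i ∈ Finset.univ.filter (fun i : Fin n => (i : ℕ) < k), A i) ∧
    ∑ i, B i = ∑ i, A i := by
  set S := ∑ j, A j * w j with hSdef
  have hn : (Finset.univ : Finset (Fin n)).Nonempty := by
    by_contra h
    rw [Finset.not_nonempty_iff_eq_empty] at h
    rw [h, Finset.sum_empty] at hAsum
    norm_num at hAsum
  have hSpos : 0 < S := Finset.sum_pos (fun i _ => mul_pos (hApos i) (hwpos i)) hn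
  constructor
  · intro k hk
    set F := Finset.univ.filter (fun i : Fin n => (i : ℕ) < k) with hF
    set G := Finset.univ.filter (fun i : Fin n => ¬ (i : ℕ) < k) with hG
    have hsplitA : ∑ i ∈ F, A i + ∑ i ∈ G, A i = 1 := by
      rw [← hAsum]; exact Finset.sum_filter_add_sum_filter_not _ _ _
    have hsplitS : ∑ i ∈ F, A i * w i + ∑ i ∈ G, A i * w i = S := by
      rw [hSdef]; exact Finset.sum_filter_add_sum_filter_not _ _ _
    have key : (∑ i ∈ F, A i * w i) * (∑ j ∈ G, A j) ≤
        (∑ i ∈ F, A i) * (∑ j ∈ G, A j * w j) := by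
      rw [Finset.sum_mul_sum, Finset.sum_mul_sum]
      apply Finset.sum_le_sum
      intro i hi
      apply Finset.sum_le_sum
      intro j hj
      have hik : (i : ℕ) < k := (Finset.mem_filter.mp hi).2
      have hkj : ¬ (j : ℕ) < k := (Finset.mem_filter.mp hj).2
      have hij : i ≤ j := Fin.le_def.mpr (le_trans hik.le (not_lt.mp hkj))
      have hw := hwmono i j hij
      nlinarith [mul_nonneg (mul_pos (hApos i) (hApos j)).le (sub_nonneg.mpr hw)]
    have hBsum : ∑ i ∈ F, B i = (∑ i ∈ F, A i * w i) / S := by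
      rw [Finset.sum_div]; exact Finset.sum_congr rfl (fun i _ => hB i)
    rw [hBsum, div_le_iff₀ hSpos]
    calc ∑ i ∈ F, A i * w i
        = (∑ i ∈ F, A i * w i) * (∑ i ∈ F, A i + ∑ i ∈ G, A i) := by
          rw [hsplitA]; ring
      _ = (∑ i ∈ F, A i * w i) * (∑ i ∈ F, A i)
            + (∑ i ∈ F, A i * w i) * (∑ j ∈ G, A j) := by ring
      _ ≤ (∑ i ∈ F, A i) * (∑ i ∈ F, A i * w i)
            + (∑ i ∈ F, A i) * (∑ j ∈ G, A j * w j) := by linarith [key]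
      _ = (∑ i ∈ F, A i) * S := by rw [← hsplitS]; ring
  · have : ∑ i, B i = S / S := by
      rw [Finset.sum_div]; exact Finset.sum_congr rfl (fun i _ => hB i)
    rw [this, div_self hSpos.ne', hAsum]
end

section
/- For 0 < ρ̂ < ε, define w(u) = I_2(u)/I_1(u) for u > ε, where I_1(u) = ∫_ε^u 1/v² dv and I_2(u) = ∫_ε^u 1/(v² - ρ̂v) dv. Then w is strictly decreasing on (ε, ∞). -/
open Real intervalIntegral

theorem int1 (ρ ε u : ℝ) (hρ : 0 < ρ) (hρε : ρ < ε) (hu : ε < u) :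
    ∫ v in ε..u, 1 / v ^ 2 = 1/ε - 1/u := by
  have hε0 : 0 < ε := lt_trans hρ hρε
  have hu0 : 0 < u := lt_trans hε0 hu
  have h0 : (0:ℝ) ∉ Set.uIcc ε u := by
    rw [Set.uIcc_of_le hu.le]
    intro h
    exact absurd (Set.mem_Icc.mp h).1 (by linarith)
  have : ∫ v in ε..u, 1 / v ^ 2 = ∫ v in ε..u, v ^ (-2 : ℤ) := by
    apply integral_congr
    intro x hx
    simp [zpow_neg, one_div, zpow_two, pow_two]
  rw [this, integral_zpow (Or.inr ⟨by norm_num, h0⟩)]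
  norm_num
  field_simp
  ring

theorem int2 (ρ ε u : ℝ) (hρ : 0 < ρ) (hρε : ρ < ε) (hu : ε < u) :
    ∫ v in ε..u, 1 / (v ^ 2 - ρ * v)
      = (Real.log (u - ρ) - Real.log (ε - ρ) - (Real.log u - Real.log ε)) / ρ := by
  have hε0 : 0 < ε := lt_trans hρ hρε
  have hu0 : 0 < u := lt_trans hε0 hu
  have h1 : ∫ v in ε..u, 1 / (v ^ 2 - ρ * v)
      = ∫ v in ε..u, (1/(v - ρ) - 1/v) / ρ := by
    apply integral_congr
    intro x hx
    rw [Set.uIcc_of_le hu.le] at hx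
    have hx1 : ε ≤ x := hx.1
    have hxρ : x - ρ ≠ 0 := by intro h; nlinarith [sub_eq_zero.mp h]
    have hx0 : x ≠ 0 := by intro h; nlinarith
    have hxx : x^2 - ρ*x ≠ 0 := by
      have : x^2 - ρ*x = (x - ρ)*x := by ring
      rw [this]
      exact mul_ne_zero hxρ hx0
    field_simp
    ring
  rw [h1]
  have hi1 : IntervalIntegrable (fun v => 1/(v-ρ)) MeasureTheory.volume ε u := by
    apply ContinuousOn.intervalIntegrable
    apply ContinuousOn.div continuousOn_const (by fun_prop)
    intro x hx
    rw [Set.uIcc_of_le hu.le] at hx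
    have := hx.1
    intro h
    nlinarith [sub_eq_zero.mp h]
  have hi2 : IntervalIntegrable (fun v => 1/v) MeasureTheory.volume ε u := by
    apply ContinuousOn.intervalIntegrable
    apply ContinuousOn.div continuousOn_const (by fun_prop)
    intro x hx
    rw [Set.uIcc_of_le hu.le] at hx
    have := hx.1
    exact ne_of_gt (by linarith)
  rw [integral_div, integral_sub hi1 hi2]
  have e1 : (∫ v in ε..u, 1/(v-ρ)) = Real.log (u - ρ) - Real.log (ε - ρ) := by
    rw [show (∫ v in ε..u, 1/(v-ρ)) = ∫ v in ε-ρ..u-ρ, 1/v from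
      integral_comp_sub_right (fun x => 1/x) ρ]
    rw [integral_one_div, Real.log_div (by linarith) (by intro h; nlinarith [sub_eq_zero.mp h])]
    rw [Set.uIcc_of_le (by linarith)]
    intro h
    have := (Set.mem_Icc.mp h).1; linarith
  have e2 : (∫ v in ε..u, 1/v) = Real.log u - Real.log ε := by
    rw [integral_one_div, Real.log_div (ne_of_gt hu0) (ne_of_gt hε0)]
    rw [Set.uIcc_of_le hu.le]
    intro h
    have := (Set.mem_Icc.mp h).1; linarith
  rw [e1, e2]

noncomputable def g (ρ ε : ℝ) (u : ℝ) : ℝ :=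
  ((Real.log (u - ρ) - Real.log (ε - ρ) - (Real.log u - Real.log ε)) / ρ) / (1/ε - 1/u)

theorem g_deriv (ρ ε : ℝ) (hρ : 0 < ρ) (hρε : ρ < ε) (x : ℝ) (hx : ε < x) :
    HasDerivAt (g ρ ε)
      ((((x-ρ)⁻¹ - x⁻¹)/ρ * (1/ε - 1/x) -
        ((Real.log (x - ρ) - Real.log (ε - ρ) - (Real.log x - Real.log ε)) / ρ) * (x^2)⁻¹)
        / (1/ε - 1/x)^2) x := by
  have hε0 : 0 < ε := lt_trans hρ hρε
  have hx0 : 0 < x := lt_trans hε0 hx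
  have hxρ : 0 < x - ρ := by linarith
  have hnum : HasDerivAt (fun u => (Real.log (u - ρ) - Real.log (ε - ρ) - (Real.log u - Real.log ε)) / ρ)
      (((x-ρ)⁻¹ - x⁻¹)/ρ) x := by
    have h1 : HasDerivAt (fun u : ℝ => Real.log (u - ρ)) (x - ρ)⁻¹ x := by
      have := ((hasDerivAt_id x).sub_const ρ).log (ne_of_gt hxρ)
      simpa using this
    have h2 : HasDerivAt Real.log x⁻¹ x := Real.hasDerivAt_log (ne_of_gt hx0)
    exact (((h1.sub_const _).sub (h2.sub_const _))).div_const ρ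
  have hden : HasDerivAt (fun u : ℝ => 1/ε - 1/u) ((x^2)⁻¹) x := by
    have := (hasDerivAt_inv (ne_of_gt hx0)).const_sub (1/ε)
    simp only [one_div] at this ⊢
    rw [neg_neg] at this
    exact this
  have hden0 : 1/ε - 1/x ≠ 0 := by
    have : 1/x < 1/ε := one_div_lt_one_div_of_lt hε0 hx
    linarith
  exact hnum.div hden hden0



theorem aux_deriv_neg (ρ ε : ℝ) (hρ : 0 < ρ) (hρε : ρ < ε) (x : ℝ) (hx : ε < x) :
    (((x-ρ)⁻¹ - x⁻¹)/ρ * (1/ε - 1/x) -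
        ((Real.log (x - ρ) - Real.log (ε - ρ) - (Real.log x - Real.log ε)) / ρ) * (x^2)⁻¹)
        / (1/ε - 1/x)^2 < 0 := by
  have hε0 : 0 < ε := lt_trans hρ hρε
  have hx0 : 0 < x := lt_trans hε0 hx
  have hxρ : 0 < x - ρ := by linarith
  have hερ : 0 < ε - ρ := by linarith
  have hden : 0 < 1/ε - 1/x := by
    have : 1/x < 1/ε := one_div_lt_one_div_of_lt hε0 hx
    linarith
  set A := ((x-ρ)*ε)/((ε-ρ)*x) with hAdef
  have hApos : 0 < A := by positivity
  have hA1 : 1 < A := by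
    rw [hAdef, lt_div_iff₀ (by positivity)]
    nlinarith
  have hlog : 1 - 1/A < Real.log A := by
    have h := Real.log_lt_sub_one_of_pos (show (0:ℝ) < 1/A by positivity)
      (by intro h; rw [div_eq_one_iff_eq (ne_of_gt hApos)] at h; linarith)
    rw [one_div, Real.log_inv] at h
    rw [one_div]
    linarith
  have hNA : Real.log (x - ρ) - Real.log (ε - ρ) - (Real.log x - Real.log ε) = Real.log A := by
    rw [hAdef, Real.log_div (by positivity) (by positivity),
      Real.log_mul (ne_of_gt hxρ) (ne_of_gt hε0), Real.log_mul (ne_of_gt hερ) (ne_of_gt hx0)]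
    ring
  rw [hNA]
  apply div_neg_of_neg_of_pos _ (by positivity)
  have key : ((x-ρ)⁻¹ - x⁻¹)/ρ * (1/ε - 1/x) = (1 - 1/A)/ρ * (x^2)⁻¹ := by
    rw [hAdef]
    field_simp
    ring
  rw [key]
  have h2 : (1 - 1/A)/ρ < Real.log A / ρ := by
    exact div_lt_div_of_pos_right hlog hρ
  nlinarith [mul_lt_mul_of_pos_right h2 (inv_pos.mpr (pow_pos hx0 2))]

/-- For `0 < ρ̂ < ε`, the ratio `w(u) = I₂(u)/I₁(u)` of
`I₂(u) = ∫_ε^u 1/(v² - ρ̂ v) dv` and `I₁(u) = ∫_ε^u 1/v² dv` is strictly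
decreasing on `(ε, ∞)`. -/
theorem stmt_5 (ρ ε : ℝ) (hρ : 0 < ρ) (hρε : ρ < ε) :
    StrictAntiOn
      (fun u : ℝ =>
        (∫ v in ε..u, 1 / (v ^ 2 - ρ * v)) / (∫ v in ε..u, 1 / v ^ 2))
      (Set.Ioi ε) := by
  have hg : StrictAntiOn (g ρ ε) (Set.Ioi ε) := by
    apply strictAntiOn_of_deriv_neg (convex_Ioi ε)
    · exact fun x hx => (g_deriv ρ ε hρ hρε x hx).differentiableAt.continuousAt.continuousWithinAt
    · intro x hx
      rw [interior_Ioi] at hx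
      rw [(g_deriv ρ ε hρ hρε x hx).deriv]
      exact aux_deriv_neg ρ ε hρ hρε x hx
  intro a ha b hb hab
  dsimp only
  rw [int1 ρ ε a hρ hρε ha, int2 ρ ε a hρ hρε ha, int1 ρ ε b hρ hρε hb, int2 ρ ε b hρ hρε hb]
  exact hg ha hb hab
end

section
/- Let γ, α, ρ, τ > 0, and let s₀ < s* be positive reals. Define t_GD = (τ/γ) ln √(s*/s₀) and t_SAM = (τ/γ) ln( √s*(γ + ρα√s₀) / (√s₀(γ + ρα√s*)) ). Then t_SAM < t_GD, and the difference satisfies t_GD - t_SAM = (τ/γ) ln( (γ + ρα√s*)/(γ + ρα√s₀) ) > 0. -/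
/-- The SAM escape time `t_SAM` is smaller than the GD escape time `t_GD`, and
`t_GD - t_SAM = (τ/γ) ln((γ + ρα√s*)/(γ + ρα√s₀)) > 0`. -/
theorem stmt_9 (γ α ρ τ s₀ sstar : ℝ) (hγ : 0 < γ) (hα : 0 < α) (hρ : 0 < ρ)
    (hτ : 0 < τ) (hs₀ : 0 < s₀) (hstar : s₀ < sstar) :
    (τ / γ) * Real.log (Real.sqrt sstar * (γ + ρ * α * Real.sqrt s₀) /
        (Real.sqrt s₀ * (γ + ρ * α * Real.sqrt sstar))) <
      (τ / γ) * Real.log (Real.sqrt (sstar / s₀)) ∧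
    (τ / γ) * Real.log (Real.sqrt (sstar / s₀)) -
        (τ / γ) * Real.log (Real.sqrt sstar * (γ + ρ * α * Real.sqrt s₀) /
          (Real.sqrt s₀ * (γ + ρ * α * Real.sqrt sstar))) =
      (τ / γ) * Real.log ((γ + ρ * α * Real.sqrt sstar) /
        (γ + ρ * α * Real.sqrt s₀)) ∧
    0 < (τ / γ) * Real.log ((γ + ρ * α * Real.sqrt sstar) /
        (γ + ρ * α * Real.sqrt s₀)) := by
  have ha : 0 < Real.sqrt s₀ := Real.sqrt_pos.2 hs₀
  have hb : 0 < Real.sqrt sstar := Real.sqrt_pos.2 (hs₀.trans hstar)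
  have hab : Real.sqrt s₀ < Real.sqrt sstar :=
    Real.sqrt_lt_sqrt hs₀.le hstar
  have ha' : 0 < γ + ρ * α * Real.sqrt s₀ := by positivity
  have hb' : 0 < γ + ρ * α * Real.sqrt sstar := by positivity
  have hτγ : 0 < τ / γ := div_pos hτ hγ
  have h3 : 0 < (τ / γ) * Real.log ((γ + ρ * α * Real.sqrt sstar) /
      (γ + ρ * α * Real.sqrt s₀)) := by
    apply mul_pos hτγ
    apply Real.log_pos
    rw [one_lt_div ha']
    have := mul_lt_mul_of_pos_left hab (mul_pos hρ hα); linarith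
  have h2 : (τ / γ) * Real.log (Real.sqrt (sstar / s₀)) -
        (τ / γ) * Real.log (Real.sqrt sstar * (γ + ρ * α * Real.sqrt s₀) /
          (Real.sqrt s₀ * (γ + ρ * α * Real.sqrt sstar))) =
      (τ / γ) * Real.log ((γ + ρ * α * Real.sqrt sstar) /
        (γ + ρ * α * Real.sqrt s₀)) := by
    rw [Real.sqrt_div' sstar hs₀.le]
    rw [Real.log_div (by positivity) (by positivity),
        Real.log_div (by positivity) (by positivity),
        Real.log_div (by positivity) (by positivity),
        Real.log_mul (by positivity) (by positivity),
        Real.log_mul (by positivity) (by positivity)]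
    ring
  refine ⟨by linarith, h2, h3⟩
end

section
/- Let M ≥ 2, and let u_1 < u_2 < ... < u_M be reals all greater than ε, with 0 < ρ̂ < ε. Define p_i^{GD} ∝ u_i⁶ I_1(u_i) and p_i^{SAM} ∝ u_i⁶ I_2(u_i) (each sum-normalized to probability vectors), where I_1(u) = ∫_ε^u 1/v² dv and I_2(u) = ∫_ε^u 1/(v² - ρ̂v) dv. Then the vector p^{GD} majorizes p^{SAM}, and consequently the Shannon entropy satisfies H(p^{SAM}) ≥ H(p^{GD}), with strict inequality unless the ratios I_2(u_i)/I_1(u_i) are all equal. -/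
open MeasureTheory

/-- `x` majorizes `y`: after sorting both in nonincreasing order, every partial
sum of `x` dominates the corresponding partial sum of `y`, and the total sums
agree. -/
def Majorizes {n : ℕ} (x y : Fin n → ℝ) : Prop :=
  ∃ σ τ : Equiv.Perm (Fin n), Antitone (x ∘ σ) ∧ Antitone (y ∘ τ) ∧
    (∀ k : ℕ, k ≤ n →
      ∑ i ∈ Finset.univ.filter (fun i : Fin n => (i : ℕ) < k), (y ∘ τ) i ≤
        ∑ i ∈ Finset.univ.filter (fun i : Fin n => (i : ℕ) < k), (x ∘ σ) i) ∧
    ∑ i, x i = ∑ i, y i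

/-- Shannon entropy `H(p) = -∑ p i * log (p i)`. -/
noncomputable def shannonEntropy {n : ℕ} (p : Fin n → ℝ) : ℝ :=
  -∑ i, p i * Real.log (p i)

lemma mulLog_lowerBound {x y : ℝ} (hx : 0 < x) (hy : 0 < y) :
    y * Real.log y + (Real.log y + 1) * (x - y) ≤ x * Real.log x := by
  have h : Real.log (y / x) ≤ y / x - 1 := Real.log_le_sub_one_of_pos (div_pos hy hx)
  rw [Real.log_div hy.ne' hx.ne'] at h
  have h2 := mul_le_mul_of_nonneg_left h hx.le
  have hx' : x * (y / x - 1) = y - x := by field_simp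
  rw [hx'] at h2
  nlinarith

lemma mulLog_lowerBound_strict {x y : ℝ} (hx : 0 < x) (hy : 0 < y) (hne : x ≠ y) :
    y * Real.log y + (Real.log y + 1) * (x - y) < x * Real.log x := by
  have hne' : y / x ≠ 1 := by
    intro h; apply hne
    field_simp at h; linarith
  have h : Real.log (y / x) < y / x - 1 := Real.log_lt_sub_one_of_pos (div_pos hy hx) hne'
  rw [Real.log_div hy.ne' hx.ne'] at h
  have h2 := mul_lt_mul_of_pos_left h hx
  have hx' : x * (y / x - 1) = y - x := by field_simp
  rw [hx'] at h2
  nlinarith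


lemma intg1 {ε : ℝ} (hε : 0 < ε) {c d : ℝ} (hc : ε ≤ c) (hcd : c ≤ d) :
    IntervalIntegrable (fun v : ℝ => 1 / v ^ 2) volume c d := by
  apply ContinuousOn.intervalIntegrable
  rw [Set.uIcc_of_le hcd]
  apply ContinuousOn.div continuousOn_const (by fun_prop)
  intro v hv
  exact pow_ne_zero 2 (hε.trans_le (hc.trans hv.1)).ne'

lemma intg2 {ρ ε : ℝ} (hρ : 0 < ρ) (hρε : ρ < ε) {c d : ℝ} (hc : ε ≤ c) (hcd : c ≤ d) :
    IntervalIntegrable (fun v : ℝ => 1 / (v ^ 2 - ρ * v)) volume c d := by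
  apply ContinuousOn.intervalIntegrable
  rw [Set.uIcc_of_le hcd]
  apply ContinuousOn.div continuousOn_const (by fun_prop)
  intro v hv
  have h1 : ε ≤ v := hc.trans hv.1
  nlinarith

lemma I1_pos {ε : ℝ} (hε : 0 < ε) {x : ℝ} (hx : ε < x) :
    0 < ∫ v in ε..x, 1 / v ^ 2 := by
  have h := intervalIntegral.integral_mono_on (f := fun _ : ℝ => 1 / x ^ 2) hx.le
    intervalIntegrable_const (intg1 hε le_rfl hx.le) ?_
  · rw [intervalIntegral.integral_const, smul_eq_mul] at h
    have hx0 : 0 < x := hε.trans hx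
    have : 0 < (x - ε) * (1 / x ^ 2) :=
      mul_pos (by linarith) (by positivity)
    linarith
  · intro v hv
    have hv0 : 0 < v := hε.trans_le hv.1
    apply one_div_le_one_div_of_le (by positivity)
    nlinarith [hv.2]

lemma I2_pos {ρ ε : ℝ} (hρ : 0 < ρ) (hρε : ρ < ε) {x : ℝ} (hx : ε < x) :
    0 < ∫ v in ε..x, 1 / (v ^ 2 - ρ * v) := by
  have h := intervalIntegral.integral_mono_on (f := fun _ : ℝ => 1 / x ^ 2) hx.le
    intervalIntegrable_const (intg2 hρ hρε le_rfl hx.le) ?_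
  · rw [intervalIntegral.integral_const, smul_eq_mul] at h
    have hx0 : 0 < x := (hρ.trans hρε).trans hx
    have : 0 < (x - ε) * (1 / x ^ 2) :=
      mul_pos (by linarith) (by positivity)
    linarith
  · intro v hv
    have hε : 0 < ε := hρ.trans hρε
    have hv0 : 0 < v := hε.trans_le hv.1
    have hd : 0 < v ^ 2 - ρ * v := by nlinarith [hv.1]
    apply one_div_le_one_div_of_le hd
    nlinarith [hv.2, hv.1]

lemma I1_mono {ε : ℝ} (hε : 0 < ε) {s t : ℝ} (hs : ε ≤ s) (hst : s ≤ t) :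
    (∫ v in ε..s, 1 / v ^ 2) ≤ ∫ v in ε..t, 1 / v ^ 2 := by
  rw [← intervalIntegral.integral_add_adjacent_intervals (intg1 hε le_rfl hs)
    (intg1 hε hs hst)]
  have : 0 ≤ ∫ v in s..t, 1 / v ^ 2 :=
    intervalIntegral.integral_nonneg hst fun v hv => by positivity
  linarith

lemma I2_mono {ρ ε : ℝ} (hρ : 0 < ρ) (hρε : ρ < ε) {s t : ℝ} (hs : ε ≤ s) (hst : s ≤ t) :
    (∫ v in ε..s, 1 / (v ^ 2 - ρ * v)) ≤ ∫ v in ε..t, 1 / (v ^ 2 - ρ * v) := by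
  have hε : 0 < ε := hρ.trans hρε
  rw [← intervalIntegral.integral_add_adjacent_intervals (intg2 hρ hρε le_rfl hs)
    (intg2 hρ hρε hs hst)]
  have : 0 ≤ ∫ v in s..t, 1 / (v ^ 2 - ρ * v) := by
    apply intervalIntegral.integral_nonneg hst
    intro v hv
    have : ε ≤ v := hs.trans hv.1
    have : 0 < v ^ 2 - ρ * v := by nlinarith
    positivity
  linarith

lemma crossIneq {ρ ε : ℝ} (hρ : 0 < ρ) (hρε : ρ < ε) {s t : ℝ} (hs : ε < s) (hst : s ≤ t) :
    (∫ v in ε..t, 1 / (v ^ 2 - ρ * v)) * (∫ v in ε..s, 1 / v ^ 2)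
      ≤ (∫ v in ε..s, 1 / (v ^ 2 - ρ * v)) * (∫ v in ε..t, 1 / v ^ 2) := by
  have hε : 0 < ε := hρ.trans hρε
  set c := s / (s - ρ) with hc
  have hsρ : 0 < s - ρ := by linarith
  have hs0 : 0 < s := hε.trans hs
  have h1 : c * (∫ v in ε..s, 1 / v ^ 2) ≤ ∫ v in ε..s, 1 / (v ^ 2 - ρ * v) := by
    rw [← intervalIntegral.integral_const_mul]
    apply intervalIntegral.integral_mono_on hs.le
      ((intg1 hε le_rfl hs.le).const_mul c) (intg2 hρ hρε le_rfl hs.le)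
    intro v hv
    have hv0 : 0 < v := hε.trans_le hv.1
    have hvρ : 0 < v - ρ := by linarith [hv.1]
    have hd : 0 < v ^ 2 - ρ * v := by nlinarith
    rw [hc, div_mul_div_comm, mul_one, div_le_div_iff₀ (by positivity) hd]
    nlinarith [mul_le_mul_of_nonneg_left hv.2 (by positivity : (0:ℝ) ≤ ρ * v)]
  have h2 : (∫ v in s..t, 1 / (v ^ 2 - ρ * v)) ≤ c * ∫ v in s..t, 1 / v ^ 2 := by
    rw [← intervalIntegral.integral_const_mul]
    apply intervalIntegral.integral_mono_on hst
      (intg2 hρ hρε hs.le hst) ((intg1 hε hs.le hst).const_mul c)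
    intro v hv
    have hv0 : 0 < v := hs0.trans_le hv.1
    have hvρ : 0 < v - ρ := by linarith [hv.1]
    have hd : 0 < v ^ 2 - ρ * v := by nlinarith
    rw [hc, div_mul_div_comm, mul_one, div_le_div_iff₀ hd (by positivity)]
    nlinarith [mul_le_mul_of_nonneg_left hv.1 (by positivity : (0:ℝ) ≤ ρ * v)]
  have a1 := intervalIntegral.integral_add_adjacent_intervals (intg1 hε le_rfl hs.le)
    (intg1 hε hs.le hst)
  have a2 := intervalIntegral.integral_add_adjacent_intervals (intg2 hρ hρε le_rfl hs.le)
    (intg2 hρ hρε hs.le hst)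
  have hX1 : 0 ≤ ∫ v in s..t, 1 / v ^ 2 :=
    intervalIntegral.integral_nonneg hst fun v hv => by
      have : 0 < v := hs0.trans_le hv.1; positivity
  have hI1s : 0 ≤ ∫ v in ε..s, 1 / v ^ 2 := (I1_pos hε hs).le
  rw [← a1, ← a2]
  nlinarith [mul_le_mul_of_nonneg_right h2 hI1s, mul_le_mul_of_nonneg_right h1 hX1]

lemma entropy_compare {n : ℕ} (hn : 0 < n) (p q : Fin n → ℝ)
    (hp : ∀ i, 0 < p i) (hq : ∀ i, 0 < q i)
    (hsp : ∑ i, p i = 1) (hsq : ∑ i, q i = 1)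
    (hqm : Monotone q)
    (hup : ∀ i j : Fin n, i ≤ j → q i ≤ p i → q j ≤ p j) :
    shannonEntropy p ≤ shannonEntropy q ∧
      ((∃ i, p i ≠ q i) → shannonEntropy p < shannonEntropy q) := by
  classical
  have : Nonempty (Fin n) := Fin.pos_iff_nonempty.mp hn
  set S := Finset.univ.filter (fun i : Fin n => q i ≤ p i) with hS
  have hSne : S.Nonempty := by
    by_contra h
    have hall : ∀ i : Fin n, p i < q i := by
      intro i
      by_contra hc; push_neg at hc
      exact h ⟨i, Finset.mem_filter.mpr ⟨Finset.mem_univ _, hc⟩⟩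
    have h2 := Finset.sum_lt_sum_of_nonempty Finset.univ_nonempty (fun i _ => hall i)
    rw [hsp, hsq] at h2; exact lt_irrefl _ h2
  set k := S.min' hSne with hkdef
  have hk : q k ≤ p k := (Finset.mem_filter.mp (S.min'_mem hSne)).2
  have hnonneg : ∀ i : Fin n, 0 ≤ (p i - q i) * (Real.log (q i) - Real.log (q k)) := by
    intro i
    rcases le_or_gt (q i) (p i) with h | h
    · have hki : k ≤ i := S.min'_le i (Finset.mem_filter.mpr ⟨Finset.mem_univ _, h⟩)
      have hl := Real.log_le_log (hq k) (hqm hki)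
      exact mul_nonneg (by linarith) (by linarith)
    · have hik : i ≤ k := by
        by_contra hc; push_neg at hc
        exact absurd (hup k i hc.le hk) (not_le.mpr h)
      have hl := Real.log_le_log (hq i) (hqm hik)
      nlinarith [mul_nonneg (by linarith : (0:ℝ) ≤ q i - p i)
        (by linarith : (0:ℝ) ≤ Real.log (q k) - Real.log (q i))]
  have hsum0 : ∑ i, (p i - q i) = 0 := by
    rw [Finset.sum_sub_distrib, hsp, hsq]; ring
  have hkey : 0 ≤ ∑ i, (p i - q i) * (Real.log (q i) + 1) := by
    have h1 : ∑ i, (p i - q i) * (Real.log (q i) + 1)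
        = ∑ i, (p i - q i) * (Real.log (q i) - Real.log (q k))
          + (Real.log (q k) + 1) * ∑ i, (p i - q i) := by
      rw [Finset.mul_sum, ← Finset.sum_add_distrib]
      exact Finset.sum_congr rfl fun i _ => by ring
    rw [h1, hsum0, mul_zero, add_zero]
    exact Finset.sum_nonneg fun i _ => hnonneg i
  have hcomm : ∑ i, (Real.log (q i) + 1) * (p i - q i)
      = ∑ i, (p i - q i) * (Real.log (q i) + 1) :=
    Finset.sum_congr rfl fun i _ => by ring
  constructor
  · have h2 := Finset.sum_le_sum (s := Finset.univ) (fun (i : Fin n) _ => mulLog_lowerBound (hp i) (hq i))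
    rw [Finset.sum_add_distrib, hcomm] at h2
    simp only [shannonEntropy]
    linarith
  · rintro ⟨i0, hi0⟩
    have h2 := Finset.sum_lt_sum (s := Finset.univ)
      (fun (i : Fin n) _ => mulLog_lowerBound (hp i) (hq i))
      ⟨i0, Finset.mem_univ _, mulLog_lowerBound_strict (hp i0) (hq i0) hi0⟩
    rw [Finset.sum_add_distrib, hcomm] at h2
    simp only [shannonEntropy]
    linarith

lemma cheb {n : ℕ} (a b : Fin n → ℝ) (T : Finset (Fin n))
    (h : ∀ i ∈ T, ∀ j ∈ Tᶜ, b i * a j ≤ a i * b j) :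
    (∑ i ∈ T, b i) * (∑ j, a j) ≤ (∑ i ∈ T, a i) * (∑ j, b j) := by
  classical
  rw [Finset.sum_mul_sum, Finset.sum_mul_sum]
  have split : ∀ f : Fin n → Fin n → ℝ,
      ∑ i ∈ T, ∑ j, f i j = ∑ i ∈ T, ∑ j ∈ T, f i j + ∑ i ∈ T, ∑ j ∈ Tᶜ, f i j := by
    intro f
    rw [← Finset.sum_add_distrib]
    exact Finset.sum_congr rfl fun i _ => (Finset.sum_add_sum_compl T (f i)).symm
  rw [split, split]
  have e : ∑ i ∈ T, ∑ j ∈ T, b i * a j = ∑ i ∈ T, ∑ j ∈ T, a i * b j := by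
    rw [Finset.sum_comm]
    exact Finset.sum_congr rfl fun i _ => Finset.sum_congr rfl fun j _ => by ring
  rw [e]
  have e2 : ∑ i ∈ T, ∑ j ∈ Tᶜ, b i * a j ≤ ∑ i ∈ T, ∑ j ∈ Tᶜ, a i * b j :=
    Finset.sum_le_sum fun i hi => Finset.sum_le_sum fun j hj => h i hi j hj
  linarith

lemma sum_rev_filter {n k : ℕ} (hk : k ≤ n) (f : Fin n → ℝ) :
    ∑ i ∈ Finset.univ.filter (fun i : Fin n => (i : ℕ) < k), f (Fin.rev i)
      = ∑ i ∈ Finset.univ.filter (fun i : Fin n => n - k ≤ (i : ℕ)), f i := by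
  apply Finset.sum_nbij' (fun i => Fin.rev i) (fun i => Fin.rev i)
  · intro i hi
    simp only [Finset.mem_filter, Finset.mem_univ, true_and] at hi ⊢
    rw [Fin.val_rev]
    omega
  · intro i hi
    simp only [Finset.mem_filter, Finset.mem_univ, true_and] at hi ⊢
    rw [Fin.val_rev]
    have := i.isLt
    omega
  · intro i _; exact Fin.rev_rev i
  · intro i _; exact Fin.rev_rev i
  · intro i _; rfl

/-- SAM has lower simplicity bias than GD: with `I₁(u) = ∫_ε^u 1/v²` and
`I₂(u) = ∫_ε^u 1/(v² - ρ̂v)`, the normalized GD time distribution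
`p_i^{GD} ∝ u_i⁶ I₁(u_i)` majorizes the SAM one `p_i^{SAM} ∝ u_i⁶ I₂(u_i)`,
hence `H(p^{SAM}) ≥ H(p^{GD})`, strictly unless all ratios `I₂(u_i)/I₁(u_i)`
coincide. -/
theorem stmt_18 (M : ℕ) (hM : 2 ≤ M) (ρ ε : ℝ) (hρ : 0 < ρ) (hρε : ρ < ε)
    (u : Fin M → ℝ) (hmono : StrictMono u) (hu : ∀ i, ε < u i)
    (I1 I2 : ℝ → ℝ)
    (hI1 : ∀ x, I1 x = ∫ v in ε..x, 1 / v ^ 2)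
    (hI2 : ∀ x, I2 x = ∫ v in ε..x, 1 / (v ^ 2 - ρ * v))
    (pGD pSAM : Fin M → ℝ)
    (hpGD : ∀ i, pGD i = u i ^ 6 * I1 (u i) / ∑ j, u j ^ 6 * I1 (u j))
    (hpSAM : ∀ i, pSAM i = u i ^ 6 * I2 (u i) / ∑ j, u j ^ 6 * I2 (u j)) :
    Majorizes pGD pSAM ∧
    shannonEntropy pGD ≤ shannonEntropy pSAM ∧
    ((¬ ∀ i j : Fin M, I2 (u i) / I1 (u i) = I2 (u j) / I1 (u j)) →
      shannonEntropy pGD < shannonEntropy pSAM) := by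
  classical
  have hε : 0 < ε := hρ.trans hρε
  have hM0 : 0 < M := by omega
  have hne : Nonempty (Fin M) := Fin.pos_iff_nonempty.mp hM0
  set a : Fin M → ℝ := fun i => u i ^ 6 * I1 (u i) with ha
  set b : Fin M → ℝ := fun i => u i ^ 6 * I2 (u i) with hb
  have hupos : ∀ i, 0 < u i := fun i => hε.trans (hu i)
  have hI1p : ∀ i, 0 < I1 (u i) := fun i => by rw [hI1]; exact I1_pos hε (hu i)
  have hI2p : ∀ i, 0 < I2 (u i) := fun i => by rw [hI2]; exact I2_pos hρ hρε (hu i)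
  have hap : ∀ i, 0 < a i := fun i => mul_pos (pow_pos (hupos i) 6) (hI1p i)
  have hbp : ∀ i, 0 < b i := fun i => mul_pos (pow_pos (hupos i) 6) (hI2p i)
  have hA : 0 < ∑ j, a j := Finset.sum_pos (fun i _ => hap i) Finset.univ_nonempty
  have hB : 0 < ∑ j, b j := Finset.sum_pos (fun i _ => hbp i) Finset.univ_nonempty
  have hamono : Monotone a := by
    intro i j hij
    have h1 : u i ≤ u j := hmono.monotone hij
    have h2 : u i ^ 6 ≤ u j ^ 6 := pow_le_pow_left₀ (hupos i).le h1 6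
    have h3 : I1 (u i) ≤ I1 (u j) := by rw [hI1, hI1]; exact I1_mono hε (hu i).le h1
    exact mul_le_mul h2 h3 (hI1p i).le (by positivity)
  have hbmono : Monotone b := by
    intro i j hij
    have h1 : u i ≤ u j := hmono.monotone hij
    have h2 : u i ^ 6 ≤ u j ^ 6 := pow_le_pow_left₀ (hupos i).le h1 6
    have h3 : I2 (u i) ≤ I2 (u j) := by rw [hI2, hI2]; exact I2_mono hρ hρε (hu i).le h1
    exact mul_le_mul h2 h3 (hI2p i).le (by positivity)
  have hcrossI : ∀ i j : Fin M, i ≤ j → b j * a i ≤ b i * a j := by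
    intro i j hij
    have h := crossIneq hρ hρε (hu i) (hmono.monotone hij)
    rw [← hI1 (u i), ← hI1 (u j), ← hI2 (u i), ← hI2 (u j)] at h
    have h2 := mul_le_mul_of_nonneg_right h (by positivity : (0:ℝ) ≤ u i ^ 6 * u j ^ 6)
    calc b j * a i = I2 (u j) * I1 (u i) * (u i ^ 6 * u j ^ 6) := by rw [ha, hb]; ring
      _ ≤ I2 (u i) * I1 (u j) * (u i ^ 6 * u j ^ 6) := h2
      _ = b i * a j := by rw [ha, hb]; ring
  have hpGDpos : ∀ i, 0 < pGD i := fun i => by rw [hpGD]; exact div_pos (hap i) hA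
  have hpSAMpos : ∀ i, 0 < pSAM i := fun i => by rw [hpSAM]; exact div_pos (hbp i) hB
  have hsGD : ∑ i, pGD i = 1 := by
    simp only [hpGD]; rw [← Finset.sum_div, div_self hA.ne']
  have hsSAM : ∑ i, pSAM i = 1 := by
    simp only [hpSAM]; rw [← Finset.sum_div, div_self hB.ne']
  have hGDmono : Monotone pGD := by
    intro i j hij
    rw [hpGD, hpGD]
    exact (div_le_div_iff_of_pos_right hA).mpr (hamono hij)
  have hSAMmono : Monotone pSAM := by
    intro i j hij
    rw [hpSAM, hpSAM]
    exact (div_le_div_iff_of_pos_right hB).mpr (hbmono hij)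
  have hup : ∀ i j : Fin M, i ≤ j → pSAM i ≤ pGD i → pSAM j ≤ pGD j := by
    intro i j hij h
    rw [hpSAM, hpGD] at h ⊢
    rw [div_le_div_iff₀ hB hA] at h ⊢
    have k1 := mul_le_mul_of_nonneg_right (hcrossI i j hij) hA.le
    have k2 := mul_le_mul_of_nonneg_right
      (show b i * (∑ j', a j') ≤ a i * (∑ j', b j') from h) (hap j).le
    have k3 : b j * (∑ j, a j) * a i ≤ a j * (∑ j, b j) * a i := by nlinarith
    exact le_of_mul_le_mul_right k3 (hap i)
  obtain ⟨hle, hlt⟩ := entropy_compare hM0 pGD pSAM hpGDpos hpSAMpos hsGD hsSAM hSAMmono hup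
  refine ⟨⟨Fin.revPerm, Fin.revPerm, ?_, ?_, ?_, ?_⟩, hle, ?_⟩
  · intro i j hij
    simp only [Function.comp_apply, Fin.revPerm_apply]
    exact hGDmono (Fin.rev_le_rev.mpr hij)
  · intro i j hij
    simp only [Function.comp_apply, Fin.revPerm_apply]
    exact hSAMmono (Fin.rev_le_rev.mpr hij)
  · intro k hk
    have e1 : ∑ i ∈ Finset.univ.filter (fun i : Fin M => (i : ℕ) < k), (pSAM ∘ Fin.revPerm) i
        = ∑ i ∈ Finset.univ.filter (fun i : Fin M => M - k ≤ (i : ℕ)), pSAM i := by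
      simp only [Function.comp_apply, Fin.revPerm_apply]
      exact sum_rev_filter hk pSAM
    have e2 : ∑ i ∈ Finset.univ.filter (fun i : Fin M => (i : ℕ) < k), (pGD ∘ Fin.revPerm) i
        = ∑ i ∈ Finset.univ.filter (fun i : Fin M => M - k ≤ (i : ℕ)), pGD i := by
      simp only [Function.comp_apply, Fin.revPerm_apply]
      exact sum_rev_filter hk pGD
    rw [e1, e2]
    set T := Finset.univ.filter (fun i : Fin M => M - k ≤ (i : ℕ)) with hT
    have hch := cheb a b T ?_
    · have eb : ∑ i ∈ T, pSAM i = (∑ i ∈ T, b i) / (∑ j, b j) := by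
        simp only [hpSAM]; rw [← Finset.sum_div]
      have ea : ∑ i ∈ T, pGD i = (∑ i ∈ T, a i) / (∑ j, a j) := by
        simp only [hpGD]; rw [← Finset.sum_div]
      rw [eb, ea, div_le_div_iff₀ hB hA]
      exact hch
    · intro i hi j hj
      rw [Finset.mem_compl] at hj
      rw [hT, Finset.mem_filter] at hi hj
      have hji : j ≤ i := by
        rw [Fin.le_def]
        have hj' : ¬ (M - k ≤ (j : ℕ)) := fun hc => hj ⟨Finset.mem_univ _, hc⟩
        omega
      have := hcrossI j i hji
      linarith
  · exact hsGD.trans hsSAM.symm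
  · intro hratio
    apply hlt
    by_contra hc; push_neg at hc
    apply hratio
    have e : ∀ i : Fin M, I2 (u i) / I1 (u i) = (∑ j, b j) / (∑ j, a j) := by
      intro i
      have hci := hc i
      rw [hpGD, hpSAM, div_eq_div_iff hA.ne' hB.ne'] at hci
      simp only [ha, hb] at hci
      rw [div_eq_div_iff (hI1p i).ne' hA.ne']
      have h6 : (0:ℝ) < u i ^ 6 := pow_pos (hupos i) 6
      apply mul_left_cancel₀ h6.ne'
      simp only [hb]
      ring_nf
      ring_nf at hci
      linarith
    intro i j
    rw [e i, e j]
end
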